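/- Let X be a locally compact metric space with Borel measure finite on balls, and let U ⊂ X be quasiopen. Suppose u : U → [-∞,∞] is finite q.e. and for every rational q the sets U_q = {u > q} and V_q = {u < q} are quasiopen in X, and moreover the set {x ∈ U : |u(x)| = ∞} is contained in an open set of arbitrarily small capacity. Then u is C_p-quasicontinuous. -/
import Mathlib


open Set MeasureTheory Metric ENNReal

noncomputable section

/-- A rectifiable curve parameterized by arc length, modeled as a 1-Lipschitz
map on `[0, l]`. -/
structure Curve (X : Type*) [MetricSpace X] where
  l : ℝ
  l_nonneg : 0 ≤ l
  toFun : ℝ → X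
  lip : LipschitzOnWith 1 toFun (Set.Icc 0 l)

namespace Curve

variable {X : Type*} [MetricSpace X]

/-- A curve is nonconstant if it attains at least two values. -/
def Nonconstant (γ : Curve X) : Prop :=
  ∃ s ∈ Set.Icc 0 γ.l, ∃ t ∈ Set.Icc 0 γ.l, γ.toFun s ≠ γ.toFun t

/-- The curve integral `∫_γ ρ ds`. -/
def integral (γ : Curve X) (ρ : X → ℝ≥0∞) : ℝ≥0∞ :=
  ∫⁻ t in Set.Icc 0 γ.l, ρ (γ.toFun t)

/-- The curve lies entirely in a set `U`. -/
def InSet (γ : Curve X) (U : Set X) : Prop :=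
  ∀ t ∈ Set.Icc 0 γ.l, γ.toFun t ∈ U

end Curve

variable {X : Type*} [MetricSpace X] [MeasurableSpace X] [BorelSpace X]

/-- `|a - b|` as an element of `[0,∞]`, with the convention that the result is `∞`
whenever one of the terms is infinite. -/
def erealDiff (a b : EReal) : ℝ≥0∞ :=
  if a = ⊤ ∨ a = ⊥ ∨ b = ⊤ ∨ b = ⊥ then ⊤ else ENNReal.ofReal |a.toReal - b.toReal|

/-- `g` is an upper gradient of `f` relative to the set `U` (taking `U = univ`
gives the usual notion of upper gradient on `X`). -/
def IsUpperGradientOn (f : X → EReal) (g : X → ℝ≥0∞) (U : Set X) : Prop :=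
  Measurable g ∧ ∀ γ : Curve X, γ.InSet U → γ.Nonconstant →
    erealDiff (f (γ.toFun 0)) (f (γ.toFun γ.l)) ≤ γ.integral g

/-- The `p`-th power of the Newtonian norm of `f` on `U` (intrinsic to `U`):
`∫_U |f|^p dμ + inf_g ∫_U g^p dμ`, the infimum over all upper gradients of `f` in `U`. -/
def newtonianNormOn (μ : Measure X) (p : ℝ) (U : Set X) (f : X → EReal) : ℝ≥0∞ :=
  (∫⁻ x in U, (f x).abs ^ p ∂μ) +
    ⨅ (g : X → ℝ≥0∞) (_ : IsUpperGradientOn f g U), ∫⁻ x in U, (g x) ^ p ∂μ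

/-- The Sobolev capacity `C_p^U`, intrinsic to the metric measure space `U`. -/
def capacityOn (μ : Measure X) (p : ℝ) (U : Set X) (E : Set X) : ℝ≥0∞ :=
  ⨅ (f : X → EReal) (_ : AEMeasurable f (μ.restrict U) ∧ ∀ x ∈ E, 1 ≤ f x),
    newtonianNormOn μ p U f

/-- The Sobolev capacity `C_p` with respect to the underlying space `X`. -/
def capacity (μ : Measure X) (p : ℝ) (E : Set X) : ℝ≥0∞ :=
  capacityOn μ p Set.univ E

/-- A set `U` is quasiopen if for every `ε > 0` there is an open set `G` with
`C_p(G) < ε` such that `G ∪ U` is open. -/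
def Quasiopen (μ : Measure X) (p : ℝ) (U : Set X) : Prop :=
  ∀ ε : ℝ≥0∞, 0 < ε → ∃ G : Set X, IsOpen G ∧ capacity μ p G < ε ∧ IsOpen (G ∪ U)

/-- `G` is relatively open in `U`. -/
def RelOpenIn (U G : Set X) : Prop := ∃ V : Set X, IsOpen V ∧ G = V ∩ U

/-- `V` is quasiopen in `U` with respect to a capacity `cap`: for every `ε > 0`
there is a relatively open `G ⊆ U` with `cap G < ε` such that `G ∪ V` is relatively
open in `U`. -/
def QuasiopenInWith (cap : Set X → ℝ≥0∞) (U V : Set X) : Prop :=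
  ∀ ε : ℝ≥0∞, 0 < ε → ∃ G : Set X, G ⊆ U ∧ RelOpenIn U G ∧ cap G < ε ∧
    RelOpenIn U (G ∪ V)

/-- `u` is `C_p`-quasicontinuous on `U`: for every `ε > 0` there is an open
`G ⊆ X` with `C_p(G) < ε` such that `u|_{U ∖ G}` is finite and continuous. -/
def QuasicontOn (μ : Measure X) (p : ℝ) (u : X → EReal) (U : Set X) : Prop :=
  ∀ ε : ℝ≥0∞, 0 < ε → ∃ G : Set X, IsOpen G ∧ capacity μ p G < ε ∧
    ContinuousOn u (U \ G) ∧ ∀ x ∈ U \ G, u x ≠ ⊤ ∧ u x ≠ ⊥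

/-- `u` is `C_p^U`-quasicontinuous on `U`: for every `ε > 0` there is a relatively
open `G ⊆ U` with `C_p^U(G) < ε` such that `u|_{U ∖ G}` is finite and continuous. -/
def QuasicontOnSub (μ : Measure X) (p : ℝ) (u : X → EReal) (U : Set X) : Prop :=
  ∀ ε : ℝ≥0∞, 0 < ε → ∃ G : Set X, G ⊆ U ∧ RelOpenIn U G ∧ capacityOn μ p U G < ε ∧
    ContinuousOn u (U \ G) ∧ ∀ x ∈ U \ G, u x ≠ ⊤ ∧ u x ≠ ⊥

/-- A curve family has zero `p`-modulus: there is `0 ≤ ρ ∈ L^p(X)` with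
`∫_γ ρ ds = ∞` for every `γ ∈ Γ`. -/
def ZeroModulus (μ : Measure X) (p : ℝ) (Γ : Set (Curve X)) : Prop :=
  ∃ ρ : X → ℝ≥0∞, Measurable ρ ∧ (∫⁻ x, ρ x ^ p ∂μ) < ⊤ ∧ ∀ γ ∈ Γ, γ.integral ρ = ⊤

/-- `S` is relatively open in `[0, l]`. -/
def RelOpenInIcc (S : Set ℝ) (l : ℝ) : Prop :=
  ∃ V : Set ℝ, IsOpen V ∧ S = V ∩ Set.Icc 0 l

/-- `U` is `p`-path open: for `p`-a.e. curve `γ`, the preimage `γ⁻¹(U)` is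
relatively open in `[0, l_γ]`. -/
def PPathOpen (μ : Measure X) (p : ℝ) (U : Set X) : Prop :=
  ∃ Γ : Set (Curve X), ZeroModulus μ p Γ ∧ ∀ γ : Curve X, γ ∉ Γ →
    RelOpenInIcc {t ∈ Set.Icc 0 γ.l | γ.toFun t ∈ U} γ.l

/-- `f ∈ N^{1,p}(U)` (intrinsic to `U`). -/
def MemNewtonianOn (μ : Measure X) (p : ℝ) (U : Set X) (f : X → EReal) : Prop :=
  AEMeasurable f (μ.restrict U) ∧ newtonianNormOn μ p U f < ⊤

/-- `f ∈ N^{1,p}(X)`. -/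
def MemNewtonian (μ : Measure X) (p : ℝ) (f : X → EReal) : Prop :=
  MemNewtonianOn μ p Set.univ f



section Aux

/-! ### Clamping to `[0,1]` in `EReal` -/

def eclamp (e : EReal) : EReal := max 0 (min e 1)

lemma eclamp_nonneg (e : EReal) : 0 ≤ eclamp e := le_max_left _ _
lemma eclamp_le_one (e : EReal) : eclamp e ≤ 1 :=
  max_le zero_le_one (min_le_right _ _)
lemma mem01_ne_top {a : EReal} (h1 : a ≤ 1) : a ≠ ⊤ :=
  (h1.trans_lt (by rw [← EReal.coe_one]; exact EReal.coe_lt_top 1)).ne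
lemma mem01_ne_bot {a : EReal} (h0 : 0 ≤ a) : a ≠ ⊥ :=
  (lt_of_lt_of_le (by rw [← EReal.coe_zero]; exact EReal.bot_lt_coe 0) h0).ne'
lemma eclamp_ne_top (e : EReal) : eclamp e ≠ ⊤ := mem01_ne_top (eclamp_le_one e)
lemma eclamp_ne_bot (e : EReal) : eclamp e ≠ ⊥ := mem01_ne_bot (eclamp_nonneg e)
lemma eclamp_of_one_le {e : EReal} (h : 1 ≤ e) : eclamp e = 1 := by
  rw [eclamp, min_eq_right h, max_eq_right zero_le_one]
lemma measurable_eclamp : Measurable eclamp := by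
  unfold eclamp
  exact measurable_const.max (measurable_id.min measurable_const)
lemma eclamp_coe (r : ℝ) : eclamp (r : EReal) = ((max 0 (min r 1) : ℝ) : EReal) := by
  rw [eclamp, EReal.coe_strictMono.monotone.map_max, EReal.coe_strictMono.monotone.map_min]
  norm_num

lemma erealDiff_of_finite {a b : EReal} (ha : a ≠ ⊤) (ha' : a ≠ ⊥) (hb : b ≠ ⊤) (hb' : b ≠ ⊥) :
    erealDiff a b = ENNReal.ofReal |a.toReal - b.toReal| := by
  rw [erealDiff, if_neg]; tauto

lemma abs_of_nonneg_ne_top {a : EReal} (h0 : 0 ≤ a) (ht : a ≠ ⊤) :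
    a.abs = ENNReal.ofReal a.toReal := by
  have hb : a ≠ ⊥ := mem01_ne_bot h0
  lift a to ℝ using ⟨ht, hb⟩ with r
  rw [EReal.abs_def, EReal.toReal_coe, abs_of_nonneg (by exact_mod_cast h0)]

lemma clampR_aux {a b : ℝ} (h : a ≤ b) : max 0 (min b 1) - max 0 (min a 1) ≤ b - a := by
  rcases le_total a 1 with h1 | h1 <;> rcases le_total b 1 with h2 | h2 <;>
    rcases le_total a 0 with h3 | h3 <;> rcases le_total b 0 with h4 | h4 <;>
    simp only [min_def, max_def] <;> split_ifs <;> linarith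

lemma clampR_mono : Monotone (fun x : ℝ => max 0 (min x 1)) :=
  fun _ _ h => max_le_max le_rfl (min_le_min h le_rfl)

lemma clampR_lipschitz (a b : ℝ) : |max 0 (min a 1) - max 0 (min b 1)| ≤ |a - b| := by
  rcases le_total a b with h | h
  · rw [abs_sub_comm, abs_of_nonneg (sub_nonneg.2 (clampR_mono h)), abs_sub_comm,
      abs_of_nonneg (sub_nonneg.2 h)]
    exact clampR_aux h
  · rw [abs_of_nonneg (sub_nonneg.2 (clampR_mono h)), abs_of_nonneg (sub_nonneg.2 h)]
    exact clampR_aux h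

lemma erealDiff_eclamp_le (a b : EReal) : erealDiff (eclamp a) (eclamp b) ≤ erealDiff a b := by
  by_cases h : a = ⊤ ∨ a = ⊥ ∨ b = ⊤ ∨ b = ⊥
  · unfold erealDiff
    rw [if_pos h]
    exact le_top
  push_neg at h
  obtain ⟨ha, ha', hb, hb'⟩ := h
  lift a to ℝ using ⟨ha, ha'⟩ with x
  lift b to ℝ using ⟨hb, hb'⟩ with y
  rw [erealDiff_of_finite (eclamp_ne_top _) (eclamp_ne_bot _) (eclamp_ne_top _) (eclamp_ne_bot _),
    erealDiff_of_finite ha ha' hb hb', eclamp_coe, eclamp_coe]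
  simp only [EReal.toReal_coe]
  exact ENNReal.ofReal_le_ofReal (clampR_lipschitz x y)

lemma eclamp_abs_le (e : EReal) : (eclamp e).abs ≤ e.abs := by
  induction e using EReal.rec with
  | bot => simp
  | top => simp
  | coe r =>
    rw [eclamp_coe, EReal.abs_def, EReal.abs_def]
    apply ENNReal.ofReal_le_ofReal
    rcases le_or_gt r 0 with h | h
    · rw [min_comm, min_eq_right (h.trans zero_le_one), max_eq_left h]
      simp [abs_nonneg]
    rcases le_or_gt r 1 with h1 | h1
    · rw [min_eq_left h1, max_eq_right h.le]
    · rw [min_eq_right h1.le, max_eq_right zero_le_one]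
      rw [abs_one, abs_of_pos h]
      linarith

lemma measurable_eclamp_abs : Measurable (fun e => (eclamp e).abs) := by
  have h : (fun e => (eclamp e).abs) = fun e => ENNReal.ofReal ((eclamp e).toReal) :=
    funext fun e => abs_of_nonneg_ne_top (eclamp_nonneg e) (eclamp_ne_top e)
  rw [h]
  exact ENNReal.measurable_ofReal.comp (measurable_ereal_toReal.comp measurable_eclamp)

/-! ### Suprema of `[0,1]`-valued families -/

section Sup
variable {ι : Type*} [Nonempty ι] {c d : ι → EReal}

lemma iSup01_nonneg (h0 : ∀ i, 0 ≤ c i) : 0 ≤ ⨆ i, c i :=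
  le_trans (h0 (Classical.arbitrary ι)) (le_iSup c _)

omit [Nonempty ι] in
lemma iSup01_ne_top (h1 : ∀ i, c i ≤ 1) : (⨆ i, c i) ≠ ⊤ :=
  mem01_ne_top (iSup_le h1)

lemma iSup01_ne_bot (h0 : ∀ i, 0 ≤ c i) : (⨆ i, c i) ≠ ⊥ :=
  mem01_ne_bot (iSup01_nonneg h0)

lemma toReal_iSup01_le (h0 : ∀ i, 0 ≤ c i) (h1 : ∀ i, c i ≤ 1) {t : ℝ}
    (h : ∀ i, (c i).toReal ≤ t) : (⨆ i, c i).toReal ≤ t := by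
  have hle : (⨆ i, c i) ≤ (t : EReal) := by
    apply iSup_le
    intro i
    rw [← EReal.coe_toReal (mem01_ne_top (h1 i)) (mem01_ne_bot (h0 i))]
    exact_mod_cast h i
  calc (⨆ i, c i).toReal ≤ ((t : EReal)).toReal :=
        EReal.toReal_le_toReal hle (iSup01_ne_bot h0) (EReal.coe_ne_top t)
    _ = t := EReal.toReal_coe t

lemma toReal_le_toReal_iSup01 (h0 : ∀ i, 0 ≤ c i) (h1 : ∀ i, c i ≤ 1) (i : ι) :
    (c i).toReal ≤ (⨆ j, c j).toReal :=
  EReal.toReal_le_toReal (le_iSup c i) (mem01_ne_bot (h0 i)) (iSup01_ne_top h1)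

lemma erealDiff_iSup_le (h0 : ∀ i, 0 ≤ c i) (h1 : ∀ i, c i ≤ 1)
    (h0' : ∀ i, 0 ≤ d i) (h1' : ∀ i, d i ≤ 1) {T : ℝ≥0∞}
    (hT : ∀ i, erealDiff (c i) (d i) ≤ T) :
    erealDiff (⨆ i, c i) (⨆ i, d i) ≤ T := by
  rcases eq_or_ne T ⊤ with rfl | hTt
  · exact le_top
  set t := T.toReal with ht
  have habs : ∀ i, |(c i).toReal - (d i).toReal| ≤ t := by
    intro i
    have h := hT i
    rw [erealDiff_of_finite (mem01_ne_top (h1 i)) (mem01_ne_bot (h0 i))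
      (mem01_ne_top (h1' i)) (mem01_ne_bot (h0' i))] at h
    exact (ENNReal.ofReal_le_iff_le_toReal hTt).1 h
  rw [erealDiff_of_finite (iSup01_ne_top h1) (iSup01_ne_bot h0)
    (iSup01_ne_top h1') (iSup01_ne_bot h0')]
  have hCD : |(⨆ i, c i).toReal - (⨆ i, d i).toReal| ≤ t := by
    rw [abs_le]
    constructor
    · have h : (⨆ i, d i).toReal ≤ (⨆ i, c i).toReal + t := by
        apply toReal_iSup01_le h0' h1'
        intro i
        have ha := abs_le.1 (habs i)
        have h2 := toReal_le_toReal_iSup01 h0 h1 i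
        linarith
      linarith
    · have h : (⨆ i, c i).toReal ≤ (⨆ i, d i).toReal + t := by
        apply toReal_iSup01_le h0 h1
        intro i
        have ha := abs_le.1 (habs i)
        have h2 := toReal_le_toReal_iSup01 h0' h1' i
        linarith
      linarith
  exact le_trans (ENNReal.ofReal_le_ofReal hCD) ENNReal.ofReal_toReal_le

lemma abs_iSup01_le (h0 : ∀ i, 0 ≤ c i) (h1 : ∀ i, c i ≤ 1) :
    (⨆ i, c i).abs ≤ ⨆ i, (c i).abs := by
  set T := ⨆ i, (c i).abs with hT
  rcases eq_or_ne T ⊤ with h | hTt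
  · rw [h]; exact le_top
  rw [abs_of_nonneg_ne_top (iSup01_nonneg h0) (iSup01_ne_top h1)]
  have h : (⨆ i, c i).toReal ≤ T.toReal := by
    apply toReal_iSup01_le h0 h1
    intro i
    have h1' : (c i).abs ≤ T := le_iSup (fun i => (c i).abs) i
    rw [abs_of_nonneg_ne_top (h0 i) (mem01_ne_top (h1 i))] at h1'
    exact (ENNReal.ofReal_le_iff_le_toReal hTt).1 h1'
  exact le_trans (ENNReal.ofReal_le_ofReal h) ENNReal.ofReal_toReal_le

end Sup

lemma ennreal_iSup_rpow_le {ι : Type*} [Nonempty ι] (a : ι → ℝ≥0∞) {p : ℝ} (hp : 0 < p) :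
    (⨆ i, a i) ^ p ≤ ⨆ i, a i ^ p := by
  rcases le_or_gt ((⨆ i, a i) ^ p) (⨆ i, a i ^ p) with h | h
  · exact h
  exfalso
  obtain ⟨c, hc1, hc2⟩ := exists_between h
  have hd : c ^ (1/p) < ⨆ i, a i := by
    have h3 := ENNReal.rpow_lt_rpow hc2 (by positivity : (0:ℝ) < 1/p)
    rwa [← ENNReal.rpow_mul, mul_one_div_cancel hp.ne', ENNReal.rpow_one] at h3
  obtain ⟨i, hi⟩ := lt_iSup_iff.1 hd
  have h4 : c < a i ^ p := by
    have h5 := ENNReal.rpow_lt_rpow hi hp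
    rwa [← ENNReal.rpow_mul, one_div_mul_cancel hp.ne', ENNReal.rpow_one] at h5
  exact absurd (h4.trans_le (le_iSup (fun i => a i ^ p) i)) (not_lt.2 hc1.le)

/-! ### Capacity: monotonicity and countable subadditivity -/

lemma capacity_mono (μ : Measure X) (p : ℝ) {E E' : Set X} (h : E ⊆ E') :
    capacity μ p E ≤ capacity μ p E' := by
  simp only [capacity, capacityOn]
  exact le_iInf₂ fun f hf => iInf₂_le f ⟨hf.1, fun x hx => hf.2 x (h hx)⟩

lemma capacity_iUnion_le {ι : Type*} [Countable ι] [Nonempty ι] (μ : Measure X) {p : ℝ}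
    (hp : 1 ≤ p) (A : ι → Set X) :
    capacity μ p (⋃ i, A i) ≤ ∑' i, capacity μ p (A i) := by
  have hp0 : (0:ℝ) < p := lt_of_lt_of_le one_pos hp
  set S := ∑' i, capacity μ p (A i) with hSdef
  rcases eq_or_ne S ⊤ with h | hSt
  · rw [h]; exact le_top
  refine ENNReal.le_of_forall_pos_le_add fun ε hε _ => ?_
  obtain ⟨η, hηpos, hηsum⟩ :=
    ENNReal.exists_pos_sum_of_countable' (by exact_mod_cast hε.ne' : (ε:ℝ≥0∞) ≠ 0) ι
  have hcapfin : ∀ i, capacity μ p (A i) ≠ ⊤ :=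
    fun i => ((ENNReal.le_tsum i).trans_lt (lt_top_iff_ne_top.2 hSt)).ne
  have hηfin : ∀ i, η i ≠ ⊤ :=
    fun i => ((ENNReal.le_tsum i).trans_lt (hηsum.trans_le le_top)).ne
  have hη2 : ∀ i, η i / 2 ≠ 0 := fun i => (ENNReal.div_pos (hηpos i).ne' (by norm_num)).ne'
  -- choose near-optimal admissible functions
  have hex : ∀ i, ∃ f : X → EReal,
      (AEMeasurable f (μ.restrict Set.univ) ∧ ∀ x ∈ A i, 1 ≤ f x) ∧
      newtonianNormOn μ p Set.univ f < capacity μ p (A i) + η i / 2 := by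
    intro i
    have h1 : capacity μ p (A i) < capacity μ p (A i) + η i / 2 :=
      ENNReal.lt_add_right (hcapfin i) (hη2 i)
    rw [capacity, capacityOn] at h1
    obtain ⟨f, hf⟩ := iInf_lt_iff.1 h1
    obtain ⟨hfP, hfN⟩ := iInf_lt_iff.1 hf
    exact ⟨f, hfP, hfN⟩
  choose f hfP hfN using hex
  -- the inner infimum over upper gradients
  set I : ι → ℝ≥0∞ := fun i =>
    ⨅ (g : X → ℝ≥0∞) (_ : IsUpperGradientOn (f i) g Set.univ),
      ∫⁻ x in Set.univ, (g x) ^ p ∂μ with hIdef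
  have hNdef : ∀ i, newtonianNormOn μ p Set.univ (f i)
      = (∫⁻ x in Set.univ, ((f i) x).abs ^ p ∂μ) + I i := fun i => rfl
  have hIfin : ∀ i, I i ≠ ⊤ := by
    intro i
    have h1 : I i ≤ newtonianNormOn μ p Set.univ (f i) := by
      rw [hNdef i]; exact le_add_self
    have h2 : capacity μ p (A i) + η i / 2 < ⊤ :=
      ENNReal.add_lt_top.2 ⟨lt_top_iff_ne_top.2 (hcapfin i),
        ENNReal.div_lt_top (hηfin i) (by norm_num)⟩
    exact (lt_of_le_of_lt h1 (lt_trans (hfN i) h2)).ne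
  have hexg : ∀ i, ∃ g : X → ℝ≥0∞, IsUpperGradientOn (f i) g Set.univ ∧
      (∫⁻ x in Set.univ, (g x) ^ p ∂μ) < I i + η i / 2 := by
    intro i
    have h1 : I i < I i + η i / 2 := ENNReal.lt_add_right (hIfin i) (hη2 i)
    rw [hIdef] at h1
    obtain ⟨g, hg⟩ := iInf_lt_iff.1 h1
    obtain ⟨hgP, hgN⟩ := iInf_lt_iff.1 hg
    exact ⟨g, hgP, hgN⟩
  choose g hgU hgN using hexg
  set F : X → EReal := fun x => ⨆ i, eclamp (f i x) with hFdef
  set G : X → ℝ≥0∞ := fun x => ⨆ i, g i x with hGdef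
  -- F is admissible for the union
  have hFmeas : AEMeasurable F (μ.restrict Set.univ) :=
    AEMeasurable.iSup fun i => measurable_eclamp.comp_aemeasurable (hfP i).1
  have hFone : ∀ x ∈ ⋃ i, A i, 1 ≤ F x := by
    intro x hx
    obtain ⟨i, hi⟩ := Set.mem_iUnion.1 hx
    calc (1:EReal) = eclamp (f i x) := (eclamp_of_one_le ((hfP i).2 x hi)).symm
      _ ≤ F x := le_iSup (fun j => eclamp (f j x)) i
  -- G is an upper gradient of F
  have hGU : IsUpperGradientOn F G Set.univ := by
    refine ⟨Measurable.iSup fun i => (hgU i).1, fun γ hin hnc => ?_⟩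
    refine erealDiff_iSup_le (fun i => eclamp_nonneg _) (fun i => eclamp_le_one _)
      (fun i => eclamp_nonneg _) (fun i => eclamp_le_one _) (fun i => ?_)
    refine le_trans (erealDiff_eclamp_le _ _) (le_trans ((hgU i).2 γ hin hnc) ?_)
    simp only [Curve.integral]
    exact lintegral_mono fun t => le_iSup (fun j => g j (γ.toFun t)) i
  -- bound the norm of F
  have hFabs : ∀ x, (F x).abs ^ p ≤ ∑' i, (eclamp (f i x)).abs ^ p := by
    intro x
    calc (F x).abs ^ p ≤ (⨆ i, (eclamp (f i x)).abs) ^ p :=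
          ENNReal.rpow_le_rpow (abs_iSup01_le (fun i => eclamp_nonneg _)
            (fun i => eclamp_le_one _)) hp0.le
      _ ≤ ⨆ i, (eclamp (f i x)).abs ^ p := ennreal_iSup_rpow_le _ hp0
      _ ≤ ∑' i, (eclamp (f i x)).abs ^ p := iSup_le fun i => ENNReal.le_tsum i
  have hFint : (∫⁻ x in Set.univ, (F x).abs ^ p ∂μ)
      ≤ ∑' i, ∫⁻ x in Set.univ, ((f i) x).abs ^ p ∂μ := by
    calc (∫⁻ x in Set.univ, (F x).abs ^ p ∂μ)
        ≤ ∫⁻ x in Set.univ, ∑' i, (eclamp (f i x)).abs ^ p ∂μ := lintegral_mono hFabs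
      _ = ∑' i, ∫⁻ x in Set.univ, (eclamp (f i x)).abs ^ p ∂μ :=
          lintegral_tsum fun i =>
            ((measurable_eclamp_abs.comp_aemeasurable (hfP i).1).pow aemeasurable_const)
      _ ≤ ∑' i, ∫⁻ x in Set.univ, ((f i) x).abs ^ p ∂μ :=
          ENNReal.tsum_le_tsum fun i => lintegral_mono fun x =>
            ENNReal.rpow_le_rpow (eclamp_abs_le _) hp0.le
  have hGint : (∫⁻ x in Set.univ, (G x) ^ p ∂μ)
      ≤ ∑' i, ∫⁻ x in Set.univ, (g i x) ^ p ∂μ := by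
    calc (∫⁻ x in Set.univ, (G x) ^ p ∂μ)
        ≤ ∫⁻ x in Set.univ, ∑' i, (g i x) ^ p ∂μ := by
          refine lintegral_mono fun x => ?_
          exact le_trans (ennreal_iSup_rpow_le _ hp0)
            (iSup_le fun i => ENNReal.le_tsum i)
      _ = ∑' i, ∫⁻ x in Set.univ, (g i x) ^ p ∂μ :=
          lintegral_tsum fun i => ((hgU i).1.pow measurable_const).aemeasurable
  -- put things together
  have hmain : capacity μ p (⋃ i, A i) ≤ newtonianNormOn μ p Set.univ F := by
    rw [capacity, capacityOn]
    exact iInf₂_le F ⟨hFmeas, hFone⟩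
  have hN : newtonianNormOn μ p Set.univ F
      ≤ (∫⁻ x in Set.univ, (F x).abs ^ p ∂μ) + ∫⁻ x in Set.univ, (G x) ^ p ∂μ := by
    rw [newtonianNormOn]
    exact add_le_add le_rfl (iInf₂_le G hGU)
  calc capacity μ p (⋃ i, A i)
      ≤ (∫⁻ x in Set.univ, (F x).abs ^ p ∂μ) + ∫⁻ x in Set.univ, (G x) ^ p ∂μ :=
        hmain.trans hN
    _ ≤ (∑' i, ∫⁻ x in Set.univ, ((f i) x).abs ^ p ∂μ)
        + ∑' i, ∫⁻ x in Set.univ, (g i x) ^ p ∂μ := add_le_add hFint hGint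
    _ = ∑' i, ((∫⁻ x in Set.univ, ((f i) x).abs ^ p ∂μ)
        + ∫⁻ x in Set.univ, (g i x) ^ p ∂μ) := (ENNReal.tsum_add).symm
    _ ≤ ∑' i, (capacity μ p (A i) + η i) := by
        refine ENNReal.tsum_le_tsum fun i => ?_
        have h1 : (∫⁻ x in Set.univ, (g i x) ^ p ∂μ) ≤ I i + η i / 2 := (hgN i).le
        have h2 : (∫⁻ x in Set.univ, ((f i) x).abs ^ p ∂μ) + I i
            ≤ capacity μ p (A i) + η i / 2 := by
          rw [← hNdef i]; exact (hfN i).le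
        calc (∫⁻ x in Set.univ, ((f i) x).abs ^ p ∂μ) + ∫⁻ x in Set.univ, (g i x) ^ p ∂μ
            ≤ (∫⁻ x in Set.univ, ((f i) x).abs ^ p ∂μ) + (I i + η i / 2) :=
              add_le_add le_rfl h1
          _ = ((∫⁻ x in Set.univ, ((f i) x).abs ^ p ∂μ) + I i) + η i / 2 := by ring
          _ ≤ (capacity μ p (A i) + η i / 2) + η i / 2 := add_le_add h2 le_rfl
          _ = capacity μ p (A i) + η i := by
              rw [add_assoc, ENNReal.add_halves]
    _ = S + ∑' i, η i := ENNReal.tsum_add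
    _ ≤ S + ε := add_le_add le_rfl hηsum.le

end Aux

/-- If `u` is finite q.e. on a quasiopen set `U`, all rational superlevel and
sublevel sets are quasiopen, and the set where `u` is infinite is contained in open
sets of arbitrarily small capacity, then `u` is `C_p`-quasicontinuous. -/
theorem stmt15 [LocallyCompactSpace X] (μ : Measure X) (p : ℝ) (hp : 1 ≤ p)
    (hball : ∀ (x : X) (r : ℝ), μ (Metric.ball x r) < ⊤)
    (U : Set X) (hU : Quasiopen μ p U) (u : X → EReal)
    (hfin : capacity μ p {x ∈ U | u x = ⊤ ∨ u x = ⊥} = 0)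
    (hlevel : ∀ q : ℚ, Quasiopen μ p {x ∈ U | ((q : ℝ) : EReal) < u x} ∧
      Quasiopen μ p {x ∈ U | u x < ((q : ℝ) : EReal)})
    (hsmall : ∀ ε : ℝ≥0∞, 0 < ε → ∃ H : Set X, IsOpen H ∧
      {x ∈ U | u x = ⊤ ∨ u x = ⊥} ⊆ H ∧ capacity μ p H < ε) :
    QuasicontOn μ p u U := by
  intro ε hε
  set ε2 := min ε 1 with hε2def
  have hε20 : 0 < ε2 := lt_min hε zero_lt_one
  obtain ⟨η, hηpos, hηsum⟩ :=
    ENNReal.exists_pos_sum_of_countable' hε20.ne' (Unit ⊕ ℚ × Bool)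
  obtain ⟨H, hHopen, hHsub, hHcap⟩ := hsmall (η (Sum.inl ())) (hηpos _)
  have hq1 : ∀ q : ℚ, ∃ G : Set X, IsOpen G ∧ capacity μ p G < η (Sum.inr (q, true)) ∧
      IsOpen (G ∪ {x ∈ U | ((q : ℝ) : EReal) < u x}) :=
    fun q => (hlevel q).1 _ (hηpos _)
  have hq2 : ∀ q : ℚ, ∃ G : Set X, IsOpen G ∧ capacity μ p G < η (Sum.inr (q, false)) ∧
      IsOpen (G ∪ {x ∈ U | u x < ((q : ℝ) : EReal)}) :=
    fun q => (hlevel q).2 _ (hηpos _)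
  choose Wp hWpo hWpc hWpu using hq1
  choose Wm hWmo hWmc hWmu using hq2
  set A : Unit ⊕ ℚ × Bool → Set X :=
    fun i => Sum.elim (fun _ => H) (fun qb => bif qb.2 then Wp qb.1 else Wm qb.1) i with hAdef
  have hAopen : ∀ i, IsOpen (A i) := by
    rintro (⟨⟩ | ⟨q, b⟩)
    · exact hHopen
    · cases b
      · exact hWmo q
      · exact hWpo q
  have hAcap : ∀ i, capacity μ p (A i) ≤ η i := by
    rintro (⟨⟩ | ⟨q, b⟩)
    · exact hHcap.le
    · cases b
      · exact (hWmc q).le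
      · exact (hWpc q).le
  have hHsubU : H ⊆ ⋃ i, A i := Set.subset_iUnion A (Sum.inl ())
  have hWpsub : ∀ q, Wp q ⊆ ⋃ i, A i := fun q => Set.subset_iUnion A (Sum.inr (q, true))
  have hWmsub : ∀ q, Wm q ⊆ ⋃ i, A i := fun q => Set.subset_iUnion A (Sum.inr (q, false))
  refine ⟨⋃ i, A i, isOpen_iUnion hAopen, ?_, ?_, ?_⟩
  · calc capacity μ p (⋃ i, A i) ≤ ∑' i, capacity μ p (A i) := capacity_iUnion_le μ hp A
      _ ≤ ∑' i, η i := ENNReal.tsum_le_tsum hAcap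
      _ < ε2 := hηsum
      _ ≤ ε := min_le_left _ _
  · -- continuity
    intro x hx
    have hxU : x ∈ U := hx.1
    have hxG : x ∉ ⋃ i, A i := hx.2
    rw [ContinuousWithinAt]
    refine tendsto_order.2 ⟨?_, ?_⟩
    · intro a ha
      obtain ⟨q, haq, hqu⟩ := EReal.exists_rat_btwn_of_lt ha
      have hxmem : x ∈ Wp q ∪ {x ∈ U | ((q : ℝ) : EReal) < u x} :=
        Or.inr ⟨hxU, hqu⟩
      have hmem : (Wp q ∪ {x ∈ U | ((q : ℝ) : EReal) < u x}) ∈ nhds x :=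
        (hWpu q).mem_nhds hxmem
      filter_upwards [mem_nhdsWithin_of_mem_nhds hmem, self_mem_nhdsWithin] with y hy1 hy2
      rcases hy1 with hy1 | hy1
      · exact absurd (hWpsub q hy1) hy2.2
      · exact lt_trans haq hy1.2
    · intro b hb
      obtain ⟨q, huq, hqb⟩ := EReal.exists_rat_btwn_of_lt hb
      have hxmem : x ∈ Wm q ∪ {x ∈ U | u x < ((q : ℝ) : EReal)} :=
        Or.inr ⟨hxU, huq⟩
      have hmem : (Wm q ∪ {x ∈ U | u x < ((q : ℝ) : EReal)}) ∈ nhds x :=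
        (hWmu q).mem_nhds hxmem
      filter_upwards [mem_nhdsWithin_of_mem_nhds hmem, self_mem_nhdsWithin] with y hy1 hy2
      rcases hy1 with hy1 | hy1
      · exact absurd (hWmsub q hy1) hy2.2
      · exact lt_trans hy1.2 hqb
  · -- finiteness
    intro x hx
    have hfin2 : ¬(u x = ⊤ ∨ u x = ⊥) := fun h => hx.2 (hHsubU (hHsub ⟨hx.1, h⟩))
    push_neg at hfin2
    exact hfin2

end
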